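/- arXiv:1910.04848 — 9 statements merged into one kernel-verified Lean document; each statement's English description precedes it below -/
import Mathlib

section
/- In a flow network, the maximum value of an s-t preflow is equal to the maximum value of an s-t flow: the supremum of |x| over all preflows x equals the supremum of |x| over all flows x (both sets of values are nonempty, since the zero function is both a flow and a preflow). -/
/-!
A flow of nonnegative value is a preflow, and a flow of negative value is beaten by the zero
preflow. Conversely, given a preflow `x`, minimize the total arc flow `∑ i, ∑ j, y i j` over the
compact set of zero-diagonal preflows whose value is at least that of `x`. At a minimizer `y` no
node `v ∉ {s, t}` has positive excess: otherwise some arc `(j, v)` carries positive flow, and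
lowering it by `min (y j v) (excess y v)` stays in the set while decreasing the total.
-/

open Finset

variable {V : Type*}

/-- The excess of node `v` under `x`: total inflow minus total outflow. -/
def excess [Fintype V] (x : V → V → ℝ) (v : V) : ℝ :=
  (∑ j, x j v) - ∑ j, x v j

/-- `x` is capacity-feasible for capacities `u`: `0 ≤ x i j ≤ u i j` on distinct pairs. -/
def IsCapFeasible (u x : V → V → ℝ) : Prop :=
  ∀ i j, i ≠ j → 0 ≤ x i j ∧ x i j ≤ u i j

/-- A preflow: capacity-feasible with nonnegative excess at every node other than `s`. -/
def IsPreflow [Fintype V] (u : V → V → ℝ) (s : V) (x : V → V → ℝ) : Prop :=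
  IsCapFeasible u x ∧ ∀ v, v ≠ s → 0 ≤ excess x v

/-- A flow: capacity-feasible with zero excess at every node other than `s` and `t`. -/
def IsFlow [Fintype V] (u : V → V → ℝ) (s t : V) (x : V → V → ℝ) : Prop :=
  IsCapFeasible u x ∧ ∀ v, v ≠ s → v ≠ t → excess x v = 0

/-- Residual capacity of the pair `(i,j)` with respect to `x`. -/
def res (u x : V → V → ℝ) (i j : V) : ℝ := u i j + x j i - x i j

/-- A labeling `d` is valid w.r.t. `x`: `d t = 0` and `d i ≤ d j + 1` across residual arcs. -/
def IsValidLabeling [Fintype V] (u x : V → V → ℝ) (t : V) (d : V → ℕ) : Prop :=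
  d t = 0 ∧ ∀ i j, i ≠ j → 0 < res u x i j → d i ≤ d j + 1

section
variable [Fintype V]

theorem excess_congr {x y : V → V → ℝ} (h : ∀ i j, i ≠ j → x i j = y i j) (v : V) :
    excess x v = excess y v := by
  have key : ∀ z : V → V → ℝ, excess z v = ∑ j, (z j v - z v j) := fun z => by
    rw [excess, sum_sub_distrib]
  rw [key, key]
  refine sum_congr rfl fun j _ => ?_
  rcases eq_or_ne j v with rfl | hjv
  · simp
  · rw [h j v hjv, h v j hjv.symm]

theorem excess_sub (x y : V → V → ℝ) (v : V) :
    excess (x - y) v = excess x v - excess y v := by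
  simp only [excess, Pi.sub_apply, sum_sub_distrib]
  ring

theorem excess_single [DecidableEq V] {a b : V} (hab : a ≠ b) (ε : ℝ) (v : V) :
    excess (Pi.single a (Pi.single b ε) : V → V → ℝ) v
      = (if v = b then ε else 0) - (if v = a then ε else 0) := by
  rcases eq_or_ne v a with rfl | hva <;> simp [excess, Pi.single_apply, ite_apply, *]

theorem exists_pos_inflow_of_excess_pos {y : V → V → ℝ} (hy : 0 ≤ y) {v : V}
    (hv : 0 < excess y v) : ∃ j, 0 < y j v := by
  by_contra! h
  have hin : ∑ j, y j v ≤ 0 := sum_nonpos fun j _ => h j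
  have hout : 0 ≤ ∑ j, y v j := sum_nonneg fun j _ => hy v j
  rw [excess] at hv
  linarith

theorem continuous_excess (v : V) : Continuous fun x : V → V → ℝ => excess x v := by
  unfold excess; fun_prop

end

section
variable [DecidableEq V]

def zeroDiag (x : V → V → ℝ) : V → V → ℝ := fun i j => if i = j then 0 else x i j

variable {u x : V → V → ℝ}

theorem excess_zeroDiag [Fintype V] (x : V → V → ℝ) : excess (zeroDiag x) = excess x :=
  funext <| excess_congr fun _ _ hij => if_neg hij

theorem IsCapFeasible.zeroDiag_mem_Icc (hx : IsCapFeasible u x) :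
    zeroDiag x ∈ Set.Icc 0 (zeroDiag u) := by
  constructor <;> intro i j <;> by_cases hij : i = j <;> simp [zeroDiag, hij, hx i j]

theorem isCapFeasible_of_mem_Icc (hx : x ∈ Set.Icc 0 (zeroDiag u)) : IsCapFeasible u x :=
  fun i j hij => ⟨hx.1 i j, by simpa [zeroDiag, hij] using hx.2 i j⟩

variable [Fintype V] (u : V → V → ℝ) (s t : V) (c : ℝ)

/- Zeroing the diagonal, which `excess` ignores, makes this set compact; the value is bounded
below rather than fixed so that lowering an arc out of `t` stays inside. -/
def preflowsOfValueGe : Set (V → V → ℝ) :=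
  Set.Icc 0 (zeroDiag u) ∩ {y | (∀ v, v ≠ s → 0 ≤ excess y v) ∧ c ≤ excess y t}

theorem isCompact_preflowsOfValueGe : IsCompact (preflowsOfValueGe u s t c) := by
  refine isCompact_Icc.inter_right ?_
  simp only [Set.ofPred_and, Set.ofPred_forall]
  exact (isClosed_iInter fun v => isClosed_iInter fun _ =>
    isClosed_le continuous_const (continuous_excess v)).inter
      (isClosed_le continuous_const (continuous_excess t))

variable {u s t c}

theorem exists_sum_lt_of_excess_pos {y : V → V → ℝ} (hy : y ∈ preflowsOfValueGe u s t c)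
    {v : V} (hvs : v ≠ s) (hvt : v ≠ t) (hv : 0 < excess y v) :
    ∃ y' ∈ preflowsOfValueGe u s t c, ∑ i, ∑ j, y' i j < ∑ i, ∑ j, y i j := by
  obtain ⟨⟨hy0, hyu⟩, hpre, hval⟩ := hy
  obtain ⟨j, hj⟩ := exists_pos_inflow_of_excess_pos hy0 hv
  have hjv : j ≠ v := by
    rintro rfl
    have := hyu j j
    simp only [zeroDiag, if_pos] at this
    linarith
  set ε := min (y j v) (excess y v)
  have hε : 0 < ε := lt_min hj hv
  set d : V → V → ℝ := Pi.single j (Pi.single v ε)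
  have hd (i k : V) : d i k = if i = j ∧ k = v then ε else 0 := by
    simp [d, Pi.single_apply, ite_apply, ite_and]
  have hd0 : 0 ≤ d := fun i k => by rw [hd]; split_ifs <;> simp [hε.le]
  have hdy : d ≤ y := fun i k => by
    rw [hd]
    split_ifs with h
    · obtain ⟨rfl, rfl⟩ := h
      exact min_le_left _ _
    · exact hy0 i k
  have hin (w : V) : (0 : ℝ) ≤ if w = j then ε else 0 := by split_ifs <;> simp [hε.le]
  have hexc (w : V) : excess (y - d) w
      = excess y w - (if w = v then ε else 0) + (if w = j then ε else 0) := by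
    rw [excess_sub, excess_single hjv]; ring
  refine ⟨y - d, ⟨⟨sub_nonneg.2 hdy, (sub_le_self _ hd0).trans hyu⟩, fun w hws => ?_, ?_⟩, ?_⟩
  · have : (if w = v then ε else 0) ≤ excess y w := by
      split_ifs with h
      · exact h ▸ min_le_right _ _
      · exact hpre w hws
    linarith [hexc w, hin w]
  · rw [hexc, if_neg hvt.symm]
    linarith [hin t]
  · simp [d, sum_sub_distrib, Pi.single_apply, ite_apply, hε]

theorem isFlow_of_isMinOn {y : V → V → ℝ} (hy : y ∈ preflowsOfValueGe u s t c)
    (hmin : IsMinOn (fun y : V → V → ℝ => ∑ i, ∑ j, y i j) (preflowsOfValueGe u s t c) y) :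
    IsFlow u s t y := by
  refine ⟨isCapFeasible_of_mem_Icc hy.1, fun v hvs hvt => ?_⟩
  by_contra hne
  obtain ⟨y', hy', hlt⟩ :=
    exists_sum_lt_of_excess_pos hy hvs hvt ((hy.2.1 v hvs).lt_of_ne' hne)
  exact (hmin hy').not_gt hlt

end

section
variable [Fintype V] {u x : V → V → ℝ} {s : V}

theorem IsPreflow.exists_isFlow_excess_le (hx : IsPreflow u s x) (t : V) :
    ∃ f, IsFlow u s t f ∧ excess x t ≤ excess f t := by
  classical
  have hx' : zeroDiag x ∈ preflowsOfValueGe u s t (excess x t) :=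
    ⟨hx.1.zeroDiag_mem_Icc, by
      simp only [Set.mem_ofPred_eq, excess_zeroDiag]
      exact ⟨hx.2, le_rfl⟩⟩
  obtain ⟨y, hy, hmin⟩ := (isCompact_preflowsOfValueGe u s t _).exists_isMinOn ⟨_, hx'⟩
    (by fun_prop : Continuous fun y : V → V → ℝ => ∑ i, ∑ j, y i j).continuousOn
  exact ⟨y, isFlow_of_isMinOn hy hmin, hy.2.2⟩

theorem IsFlow.exists_isPreflow_excess_le {t : V} (hf : IsFlow u s t x) :
    ∃ p, IsPreflow u s p ∧ excess x t ≤ excess p t := by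
  by_cases ht : 0 ≤ excess x t
  · refine ⟨x, ⟨hf.1, fun v hvs => ?_⟩, le_rfl⟩
    rcases eq_or_ne v t with rfl | hvt
    · exact ht
    · exact (hf.2 v hvs hvt).ge
  · have hzero (v : V) : excess (0 : V → V → ℝ) v = 0 := by simp [excess]
    refine ⟨0, ⟨fun i j hij => ⟨le_rfl, (hf.1 i j hij).1.trans (hf.1 i j hij).2⟩,
      fun v _ => (hzero v).ge⟩, ?_⟩
    rw [hzero]
    exact (not_le.1 ht).le

end

theorem max_preflow_value_eq_max_flow_value_general [Fintype V] (s t : V)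
    (u : V → V → ℝ) :
    sSup {r : ℝ | ∃ x : V → V → ℝ, IsPreflow u s x ∧ excess x t = r} =
      sSup {r : ℝ | ∃ x : V → V → ℝ, IsFlow u s t x ∧ excess x t = r} := by
  apply csSup_eq_csSup_of_forall_exists_le
  · rintro _ ⟨x, hx, rfl⟩
    obtain ⟨f, hf, hle⟩ := hx.exists_isFlow_excess_le t
    exact ⟨_, ⟨f, hf, rfl⟩, hle⟩
  · rintro _ ⟨f, hf, rfl⟩
    obtain ⟨p, hp, hle⟩ := hf.exists_isPreflow_excess_le
    exact ⟨_, ⟨p, hp, rfl⟩, hle⟩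

/-- The maximum value of an s-t preflow equals the maximum value of an s-t flow. -/
theorem max_preflow_value_eq_max_flow_value [Fintype V] (s t : V) (hst : s ≠ t)
    (u : V → V → ℝ) (hu : ∀ i j, i ≠ j → 0 ≤ u i j) :
    sSup {r : ℝ | ∃ x : V → V → ℝ, IsPreflow u s x ∧ excess x t = r} =
      sSup {r : ℝ | ∃ x : V → V → ℝ, IsFlow u s t x ∧ excess x t = r} :=
  max_preflow_value_eq_max_flow_value_general s t u
end

section
/- Suppose x is a capacity-feasible function in a flow network with n = |N| nodes and d is a labeling that is valid with respect to x and satisfies d(s) ≥ n. Then the residual network G(x) contains no directed path (a walk with pairwise distinct nodes) from s to t. -/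
open Finset

variable {V : Type*}

/-! Labels drop by at most one along a residual arc and vanish at `t`, so `d s` is at most the
length of any residual `s`-`t` path, while a path with distinct nodes has fewer than `n` arcs. -/

theorem Fin.le_last_add_of_le_succ_add_one {L : ℕ} (f : Fin (L + 1) → ℕ)
    (hf : ∀ i : Fin L, f i.castSucc ≤ f i.succ + 1) (k : Fin (L + 1)) :
    f k ≤ f (Fin.last L) + (L - k) := by
  induction k using Fin.reverseInduction with
  | last => simp
  | cast i ih =>
    have := hf i
    simp only [Fin.val_succ, Fin.val_castSucc] at ih ⊢
    omega

theorem IsValidLabeling.le_length_of_path [Fintype V] {u x : V → V → ℝ} {t : V} {d : V → ℕ}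
    (hd : IsValidLabeling u x t d) {L : ℕ} (p : Fin (L + 1) → V) (hp : Function.Injective p)
    (hlast : p (Fin.last L) = t) (harc : ∀ i : Fin L, 0 < res u x (p i.castSucc) (p i.succ)) :
    d (p 0) ≤ L := by
  have hstep (i : Fin L) : d (p i.castSucc) ≤ d (p i.succ) + 1 :=
    hd.2 _ _ (hp.ne Fin.castSucc_lt_succ.ne) (harc i)
  simpa [hlast, hd.1] using Fin.le_last_add_of_le_succ_add_one (d ∘ p) hstep 0

theorem no_residual_path_of_valid_labeling_general [Fintype V] (s t : V) (u : V → V → ℝ) (x : V → V → ℝ)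
    (d : V → ℕ) (hd : IsValidLabeling u x t d) (hds : Fintype.card V ≤ d s) :
    ¬ ∃ (L : ℕ) (p : Fin (L + 1) → V), Function.Injective p ∧ p 0 = s ∧
        p (Fin.last L) = t ∧ ∀ i : Fin L, 0 < res u x (p i.castSucc) (p i.succ) := by
  rintro ⟨L, p, hp, rfl, hlast, harc⟩
  have hlabel : d (p 0) ≤ L := hd.le_length_of_path p hp hlast harc
  have hcard : L + 1 ≤ Fintype.card V := by
    simpa using Fintype.card_le_of_injective p hp
  omega

/-- If a valid labeling has `d s ≥ n`, then the residual network contains no directed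
path (walk with pairwise distinct nodes) from `s` to `t`. -/
theorem no_residual_path_of_valid_labeling [Fintype V] (s t : V) (hst : s ≠ t)
    (u : V → V → ℝ) (hu : ∀ i j, i ≠ j → 0 ≤ u i j)
    (x : V → V → ℝ) (hx : IsCapFeasible u x)
    (d : V → ℕ) (hd : IsValidLabeling u x t d) (hds : Fintype.card V ≤ d s) :
    ¬ ∃ (L : ℕ) (p : Fin (L + 1) → V), Function.Injective p ∧ p 0 = s ∧
        p (Fin.last L) = t ∧ ∀ i : Fin L, 0 < res u x (p i.castSucc) (p i.succ) :=
  no_residual_path_of_valid_labeling_general s t u x d hd hds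
end

section
/- Suppose x is a flow in a flow network such that the residual network G(x) contains no directed path from the source s to the sink t. Then x is a maximum flow: |x| ≥ |y| for every flow y. -/
open Finset

variable {V : Type*}

lemma exists_inj_path {r : V → V → Prop} {a b : V} (h : Relation.ReflTransGen r a b) :
    ∃ (L : ℕ) (p : Fin (L + 1) → V), Function.Injective p ∧ p 0 = a ∧
      p (Fin.last L) = b ∧ ∀ i : Fin L, r (p i.castSucc) (p i.succ) := by
  induction h using Relation.ReflTransGen.head_induction_on with
  | refl =>
    exact ⟨0, fun _ => b, fun i j _ => by have := i.isLt; have := j.isLt; exact Fin.ext (by omega), rfl, rfl, fun i => i.elim0⟩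
  | @head a c hac hcb ih =>
    obtain ⟨L, p, hp, h0, hl, hs⟩ := ih
    by_cases hmem : ∃ k, p k = a
    · obtain ⟨k, hk⟩ := hmem
      refine ⟨L - k.val, fun i => p ⟨k.val + i.val, by have := i.isLt; have := k.isLt; omega⟩,
        ?_, ?_, ?_, ?_⟩
      · intro i j hij
        have h2 : k.val + i.val = k.val + j.val := congrArg Fin.val (hp hij)
        exact Fin.ext (by omega)
      · simp only
        rw [show (⟨k.val + (0 : Fin (L - k.val + 1)).val, by have := k.isLt; omega⟩ : Fin (L+1)) = k
          from Fin.ext (by simp)]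
        exact hk
      · simp only
        rw [show (⟨k.val + (Fin.last (L - k.val)).val, by have := k.isLt; omega⟩ : Fin (L+1)) = Fin.last L
          from Fin.ext (by simp only [Fin.last]; have := k.isLt; omega)]
        exact hl
      · intro i
        have hiL : k.val + i.val < L := by have := i.isLt; have := k.isLt; omega
        exact hs ⟨k.val + i.val, hiL⟩
    · push_neg at hmem
      refine ⟨L + 1, Fin.cases a p, ?_, ?_, ?_, ?_⟩
      · intro i j hij
        induction i using Fin.cases with
        | zero =>
          induction j using Fin.cases with
          | zero => rfl
          | succ j => simp at hij; exact absurd hij.symm (hmem j)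
        | succ i =>
          induction j using Fin.cases with
          | zero => simp at hij; exact absurd hij (hmem i)
          | succ j => simp at hij; exact congrArg Fin.succ (hp hij)
      · rfl
      · rw [show Fin.last (L + 1) = (Fin.last L).succ from rfl]
        simp only [Fin.cases_succ]; exact hl
      · intro i
        induction i using Fin.cases with
        | zero =>
          simp only [Fin.castSucc_zero, Fin.cases_zero, Fin.cases_succ, h0]
          exact hac
        | succ i =>
          simp only [← Fin.succ_castSucc, Fin.cases_succ]
          exact hs i

/-- A flow whose residual network contains no directed path from `s` to `t` is a
maximum flow. -/
theorem isMaxFlow_of_no_residual_path [Fintype V] (s t : V) (hst : s ≠ t)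
    (u : V → V → ℝ) (hu : ∀ i j, i ≠ j → 0 ≤ u i j)
    (x : V → V → ℝ) (hx : IsFlow u s t x)
    (hnopath : ¬ ∃ (L : ℕ) (p : Fin (L + 1) → V), Function.Injective p ∧ p 0 = s ∧
        p (Fin.last L) = t ∧ ∀ i : Fin L, 0 < res u x (p i.castSucc) (p i.succ)) :
    ∀ y : V → V → ℝ, IsFlow u s t y → excess y t ≤ excess x t := by
  intro y hy
  classical
  set Rel : V → V → Prop := fun i j => 0 < res u x i j with hRel
  set S : Finset V := Finset.univ.filter (fun v => Relation.ReflTransGen Rel s v) with hS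
  have hsS : s ∈ S := by simp only [hS, Finset.mem_filter, Finset.mem_univ, true_and]; exact Relation.ReflTransGen.refl
  have htS : t ∉ S := by
    simp only [hS, Finset.mem_filter, Finset.mem_univ, true_and]
    intro hreach
    obtain ⟨L, p, h1, h2, h3, h4⟩ := exists_inj_path hreach
    exact hnopath ⟨L, p, h1, h2, h3, h4⟩
  have hclosed : ∀ i ∈ S, ∀ j, j ∉ S → ¬ (0 < res u x i j) := by
    intro i hi j hj hpos
    apply hj
    simp only [hS, Finset.mem_filter, Finset.mem_univ, true_and] at hi ⊢
    exact hi.tail hpos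
  have key : ∀ z : V → V → ℝ, IsFlow u s t z →
      excess z t = ∑ i ∈ S, ∑ j ∈ Sᶜ, (z i j - z j i) := by
    intro z hz
    have h1 : ∑ v ∈ Sᶜ, excess z v = excess z t := by
      apply Finset.sum_eq_single_of_mem t (Finset.mem_compl.mpr htS)
      intro v hv hvt
      exact hz.2 v (fun h => (Finset.mem_compl.mp hv) (h ▸ hsS)) hvt
    rw [← h1]
    have expand : ∀ v, excess z v =
        (∑ j ∈ S, (z j v - z v j)) + ∑ j ∈ Sᶜ, (z j v - z v j) := by
      intro v
      rw [Finset.sum_add_sum_compl, excess, Finset.sum_sub_distrib]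
    calc ∑ v ∈ Sᶜ, excess z v
        = (∑ v ∈ Sᶜ, ∑ j ∈ S, (z j v - z v j))
          + ∑ v ∈ Sᶜ, ∑ j ∈ Sᶜ, (z j v - z v j) := by
          rw [← Finset.sum_add_distrib]; exact Finset.sum_congr rfl fun v _ => expand v
      _ = ∑ v ∈ Sᶜ, ∑ j ∈ S, (z j v - z v j) := by
          have : ∑ v ∈ Sᶜ, ∑ j ∈ Sᶜ, (z j v - z v j) = 0 := by
            simp only [Finset.sum_sub_distrib]
            rw [Finset.sum_comm]
            ring
          rw [this, add_zero]
      _ = ∑ i ∈ S, ∑ j ∈ Sᶜ, (z i j - z j i) := Finset.sum_comm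
  rw [key y hy, key x hx]
  apply Finset.sum_le_sum
  intro i hi
  apply Finset.sum_le_sum
  intro j hj
  have hjS : j ∉ S := Finset.mem_compl.mp hj
  have hij : i ≠ j := fun h => hjS (h ▸ hi)
  have hres : res u x i j ≤ 0 := le_of_not_gt (hclosed i hi j hjS)
  have hxu : u i j ≤ x i j - x j i := by simp only [res] at hres; linarith
  have hy1 : y i j ≤ u i j := (hy.1 i j hij).2
  have hy2 : 0 ≤ y j i := (hy.1 j i hij.symm).1
  linarith
end

section
/- (Push preserves the push-relabel invariants.) Let x be a preflow, d a labeling valid with respect to x, and (i,j) a pair of distinct nodes with e_x(i) > 0, r_{ij}(x) > 0, and d(i) = d(j) + 1 (an admissible arc). Let 0 < δ ≤ min{e_x(i), r_{ij}(x)}, and let x' agree with x everywhere except x'(j,i) = x(j,i) − min{δ, x(j,i)} and x'(i,j) = x(i,j) + (δ − min{δ, x(j,i)}). Then: (1) x' is a preflow; (2) e_{x'}(i) = e_x(i) − δ, e_{x'}(j) = e_x(j) + δ, and e_{x'}(v) = e_x(v) for every other node v; (3) r_{ij}(x') = r_{ij}(x) − δ, r_{ji}(x') = r_{ji}(x) +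 δ, and all other residual capacities are unchanged; (4) d is valid with respect to x'. -/
/-!
A push changes `x` only on the pairs `(i,j)` and `(j,i)`, and raises the net flow
`x i j - x j i` by exactly `δ`. Excesses and residual capacities depend on `x` only through
such net flows, which gives the bookkeeping. Cancelling first and then sending stays within
capacity because `δ ≤ r_ij`. The only pairs whose residual status can change are `(i,j)` and
`(j,i)`, and admissibility `d i = d j + 1` gives the validity inequality across both.
-/

open Finset

variable {V : Type*}

def EqOffPair (x' x : V → V → ℝ) (i j : V) : Prop :=
  ∀ a b, ¬(a = i ∧ b = j) → ¬(a = j ∧ b = i) → x' a b = x a b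

section EqOffPair

variable {x x' : V → V → ℝ} {i j : V}

theorem EqOffPair.symm (h : EqOffPair x' x i j) : EqOffPair x' x j i :=
  fun a b h1 h2 => h a b h2 h1

theorem res_eq_of_eqOffPair (u : V → V → ℝ) (h : EqOffPair x' x i j) {a b : V}
    (h1 : ¬(a = i ∧ b = j)) (h2 : ¬(a = j ∧ b = i)) : res u x' a b = res u x a b := by
  rw [res, res, h a b h1 h2, h b a (fun h => h2 ⟨h.2, h.1⟩) (fun h => h1 ⟨h.2, h.1⟩)]

theorem IsCapFeasible.of_eqOffPair {u : V → V → ℝ} (hx : IsCapFeasible u x)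
    (h : EqOffPair x' x i j) (hij : 0 ≤ x' i j ∧ x' i j ≤ u i j)
    (hji : 0 ≤ x' j i ∧ x' j i ≤ u j i) : IsCapFeasible u x' := by
  intro a b hab
  by_cases h1 : a = i ∧ b = j
  · obtain ⟨rfl, rfl⟩ := h1
    exact hij
  by_cases h2 : a = j ∧ b = i
  · obtain ⟨rfl, rfl⟩ := h2
    exact hji
  rw [h a b h1 h2]
  exact hx a b hab

theorem IsCapFeasible.of_push {u : V → V → ℝ} (hx : IsCapFeasible u x) (hij : i ≠ j)
    {δ : ℝ} (hδ : 0 ≤ δ) (hδr : δ ≤ res u x i j) (h : EqOffPair x' x i j)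
    (h'ji : x' j i = x j i - min δ (x j i)) (h'ij : x' i j = x i j + (δ - min δ (x j i))) :
    IsCapFeasible u x' := by
  obtain ⟨hij₀, hiju⟩ := hx i j hij
  obtain ⟨hji₀, hjiu⟩ := hx j i hij.symm
  have hmin₀ : 0 ≤ min δ (x j i) := le_min hδ hji₀
  have hmin_ge : δ - (u i j - x i j) ≤ min δ (x j i) :=
    le_min (by linarith) (by rw [res] at hδr; linarith)
  refine hx.of_eqOffPair h ⟨?_, ?_⟩ ⟨?_, ?_⟩
  · linarith [min_le_left δ (x j i)]
  · linarith
  · linarith [min_le_right δ (x j i)]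
  · linarith

variable [Fintype V]

theorem excess_eq_of_eqOffPair (h : EqOffPair x' x i j) {v : V} (hvi : v ≠ i) (hvj : v ≠ j) :
    excess x' v = excess x v := by
  unfold excess
  congr 1
  · exact sum_congr rfl fun k _ => h k v (fun h => hvj h.2) (fun h => hvi h.2)
  · exact sum_congr rfl fun k _ => h v k (fun h => hvi h.1) (fun h => hvj h.1)

theorem excess_left_of_eqOffPair (h : EqOffPair x' x i j) (hij : i ≠ j) {δ : ℝ}
    (hnet : x' i j - x' j i = x i j - x j i + δ) : excess x' i = excess x i - δ := by
  have hin : ∑ k, x' k i - ∑ k, x k i = x' j i - x j i := by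
    rw [← sum_sub_distrib]
    exact Fintype.sum_eq_single j fun k hk =>
      sub_eq_zero.2 (h k i (fun h => hij h.2) (fun h => hk h.1))
  have hout : ∑ k, x' i k - ∑ k, x i k = x' i j - x i j := by
    rw [← sum_sub_distrib]
    exact Fintype.sum_eq_single j fun k hk =>
      sub_eq_zero.2 (h i k (fun h => hk h.2) (fun h => hij h.1))
  unfold excess
  linarith

theorem excess_right_of_eqOffPair (h : EqOffPair x' x i j) (hij : i ≠ j) {δ : ℝ}
    (hnet : x' i j - x' j i = x i j - x j i + δ) : excess x' j = excess x j + δ := by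
  rw [excess_left_of_eqOffPair h.symm hij.symm (δ := -δ) (by linarith), sub_neg_eq_add]

theorem IsPreflow.of_eqOffPair {u : V → V → ℝ} {s : V} (hx : IsPreflow u s x)
    (hcap : IsCapFeasible u x') (h : EqOffPair x' x i j) (hij : i ≠ j) {δ : ℝ}
    (hnet : x' i j - x' j i = x i j - x j i + δ) (hδ : 0 ≤ δ) (hδe : δ ≤ excess x i) :
    IsPreflow u s x' := by
  refine ⟨hcap, fun v hvs => ?_⟩
  by_cases hvi : v = i
  · subst hvi
    rw [excess_left_of_eqOffPair h hij hnet]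
    linarith
  by_cases hvj : v = j
  · subst hvj
    rw [excess_right_of_eqOffPair h hij hnet]
    linarith [hx.2 v hvs]
  rw [excess_eq_of_eqOffPair h hvi hvj]
  exact hx.2 v hvs

theorem IsValidLabeling.of_eqOffPair {u : V → V → ℝ} {t : V} {d : V → ℕ}
    (hd : IsValidLabeling u x t d) (h : EqOffPair x' x i j)
    (hij : d i ≤ d j + 1) (hji : d j ≤ d i + 1) : IsValidLabeling u x' t d := by
  refine ⟨hd.1, fun a b hab hr => ?_⟩
  by_cases h1 : a = i ∧ b = j
  · obtain ⟨rfl, rfl⟩ := h1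
    exact hij
  by_cases h2 : a = j ∧ b = i
  · obtain ⟨rfl, rfl⟩ := h2
    exact hji
  exact hd.2 a b hab (res_eq_of_eqOffPair u h h1 h2 ▸ hr)

end EqOffPair

theorem push_preserves_invariants_general [Fintype V] (s t : V)
    (u : V → V → ℝ)
    (x : V → V → ℝ) (hx : IsPreflow u s x)
    (d : V → ℕ) (hd : IsValidLabeling u x t d)
    (i j : V) (hij : i ≠ j)
    (hadm : d i = d j + 1)
    (δ : ℝ) (hδpos : 0 < δ) (hδle : δ ≤ min (excess x i) (res u x i j))
    (x' : V → V → ℝ)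
    (h'ji : x' j i = x j i - min δ (x j i))
    (h'ij : x' i j = x i j + (δ - min δ (x j i)))
    (h'other : ∀ a b : V, ¬(a = j ∧ b = i) → ¬(a = i ∧ b = j) → x' a b = x a b) :
    IsPreflow u s x' ∧
    (excess x' i = excess x i - δ ∧ excess x' j = excess x j + δ ∧
      ∀ v, v ≠ i → v ≠ j → excess x' v = excess x v) ∧
    (res u x' i j = res u x i j - δ ∧ res u x' j i = res u x j i + δ ∧
      ∀ a b : V, ¬(a = i ∧ b = j) → ¬(a = j ∧ b = i) → res u x' a b = res u x a b) ∧
    IsValidLabeling u x' t d := by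
  have hoff : EqOffPair x' x i j := fun a b h1 h2 => h'other a b h2 h1
  have hnet : x' i j - x' j i = x i j - x j i + δ := by rw [h'ij, h'ji]; ring
  have hcap := hx.1.of_push hij hδpos.le (hδle.trans (min_le_right _ _)) hoff h'ji h'ij
  refine ⟨hx.of_eqOffPair hcap hoff hij hnet hδpos.le (hδle.trans (min_le_left _ _)),
    ⟨excess_left_of_eqOffPair hoff hij hnet, excess_right_of_eqOffPair hoff hij hnet,
      fun v hvi hvj => excess_eq_of_eqOffPair hoff hvi hvj⟩,
    ⟨by rw [res, res]; linarith, by rw [res, res]; linarith,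
      fun a b h1 h2 => res_eq_of_eqOffPair u hoff h1 h2⟩,
    hd.of_eqOffPair hoff hadm.le (by omega)⟩

/-- A push on an admissible arc preserves the push-relabel invariants, changes the
excesses of `i` and `j` by `∓δ`/`±δ`, and changes only the residual capacities of
`(i,j)` and `(j,i)`, by `∓δ`/`±δ`. -/
theorem push_preserves_invariants [Fintype V] (s t : V) (hst : s ≠ t)
    (u : V → V → ℝ) (hu : ∀ i j, i ≠ j → 0 ≤ u i j)
    (x : V → V → ℝ) (hx : IsPreflow u s x)
    (d : V → ℕ) (hd : IsValidLabeling u x t d)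
    (i j : V) (hij : i ≠ j)
    (hei : 0 < excess x i) (hrij : 0 < res u x i j) (hadm : d i = d j + 1)
    (δ : ℝ) (hδpos : 0 < δ) (hδle : δ ≤ min (excess x i) (res u x i j))
    (x' : V → V → ℝ)
    (h'ji : x' j i = x j i - min δ (x j i))
    (h'ij : x' i j = x i j + (δ - min δ (x j i)))
    (h'other : ∀ a b : V, ¬(a = j ∧ b = i) → ¬(a = i ∧ b = j) → x' a b = x a b) :
    IsPreflow u s x' ∧
    (excess x' i = excess x i - δ ∧ excess x' j = excess x j + δ ∧
      ∀ v, v ≠ i → v ≠ j → excess x' v = excess x v) ∧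
    (res u x' i j = res u x i j - δ ∧ res u x' j i = res u x j i + δ ∧
      ∀ a b : V, ¬(a = i ∧ b = j) → ¬(a = j ∧ b = i) → res u x' a b = res u x a b) ∧
    IsValidLabeling u x' t d :=
  push_preserves_invariants_general s t u x hx d hd i j hij hadm δ hδpos hδle x' h'ji h'ij h'other
end

section
/- (Relabel preserves validity.) Let x be a preflow, d a labeling valid with respect to x, and i a node with i ≠ t such that no arc out of i is admissible, i.e., d(i) ≤ d(j) for every node j with r_{ij}(x) > 0. Define d' by d'(i) = d(i) + 1 and d'(v) = d(v) for v ≠ i. Then d' is valid with respect to x. -/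
open Finset

variable {V : Type*}

theorem IsValidLabeling.of_le_of_eq_off [Fintype V] {u x : V → V → ℝ} {t i : V}
    {d d' : V → ℕ} (hd : IsValidLabeling u x t d) (hle : d ≤ d') (ht : d' t = 0)
    (hoff : ∀ v, v ≠ i → d' v = d v)
    (hout : ∀ j, j ≠ i → 0 < res u x i j → d' i ≤ d' j + 1) :
    IsValidLabeling u x t d' := by
  refine ⟨ht, fun a b hab hr => ?_⟩
  by_cases ha : a = i
  · subst ha
    exact hout b (Ne.symm hab) hr
  · calc d' a = d a := hoff a ha
      _ ≤ d b + 1 := hd.2 a b hab hr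
      _ ≤ d' b + 1 := Nat.add_le_add_right (hle b) 1

theorem relabel_preserves_validity_general [Fintype V] (t : V)
    (u : V → V → ℝ)
    (x : V → V → ℝ)
    (d : V → ℕ) (hd : IsValidLabeling u x t d)
    (i : V) (hit : i ≠ t)
    (hnoadm : ∀ j : V, j ≠ i → 0 < res u x i j → d i ≤ d j)
    (d' : V → ℕ) (h'i : d' i = d i + 1) (h'other : ∀ v, v ≠ i → d' v = d v) :
    IsValidLabeling u x t d' := by
  have hle : d ≤ d' := fun v => by
    by_cases hv : v = i
    · rw [hv, h'i]; exact Nat.le_succ _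
    · exact (h'other v hv).ge
  refine hd.of_le_of_eq_off hle ?_ h'other fun j hj hr => ?_
  · rw [h'other t hit.symm, hd.1]
  · rw [h'i, h'other j hj]
    exact Nat.add_le_add_right (hnoadm j hj hr) 1

/-- Relabeling a node `i ≠ t` with no admissible outgoing arc preserves validity
of the labeling. -/
theorem relabel_preserves_validity [Fintype V] (s t : V) (hst : s ≠ t)
    (u : V → V → ℝ) (hu : ∀ i j, i ≠ j → 0 ≤ u i j)
    (x : V → V → ℝ) (hx : IsPreflow u s x)
    (d : V → ℕ) (hd : IsValidLabeling u x t d)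
    (i : V) (hit : i ≠ t)
    (hnoadm : ∀ j : V, j ≠ i → 0 < res u x i j → d i ≤ d j)
    (d' : V → ℕ) (h'i : d' i = d i + 1) (h'other : ∀ v, v ≠ i → d' v = d v) :
    IsValidLabeling u x t d' :=
  relabel_preserves_validity_general t u x d hd i hit hnoadm d' h'i h'other
end

section
/- For every preflow x in a flow network and every node v with e_x(v) > 0, there is a directed path from v to the source s in the residual network G(x). -/
open Finset

variable {V : Type*}

/-- From any chain from `a` ending at `b`, extract a duplicate-free chain. -/
lemma chain_nodup_aux {α : Type*} [DecidableEq α] (R : α → α → Prop) (b : α) :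
    ∀ (n : ℕ) (l : List α) (a : α), l.length ≤ n → List.Chain R a l →
      (a :: l).getLast (List.cons_ne_nil a l) = b →
      ∃ l', l' ⊆ l ∧ List.Chain R a l' ∧
        (a :: l').getLast (List.cons_ne_nil a l') = b ∧ (a :: l').Nodup := by
  intro n
  induction n with
  | zero =>
    intro l a hl hc hlast
    have : l = [] := List.length_eq_zero_iff.mp (Nat.le_zero.mp hl)
    subst this
    exact ⟨[], by simp, List.Chain.nil, hlast, by simp⟩
  | succ n ih =>
    intro l a hl hc hlast
    by_cases ha : a ∈ l
    · obtain ⟨l1, l2, rfl⟩ := List.append_of_mem ha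
      have hc2 : List.Chain R a l2 := (List.isChain_cons_split.mp hc).2
      have hlen2 : l2.length ≤ n := by
        simp only [List.length_append, List.length_cons] at hl; omega
      have hlast2 : (a :: l2).getLast (List.cons_ne_nil a l2) = b := by
        rw [← hlast]
        have : a :: (l1 ++ a :: l2) = (a :: l1) ++ (a :: l2) := by simp
        rw [List.getLast_congr _ (by simp) this, List.getLast_append]
        simp
      obtain ⟨l', hsub, hch, hl', hnd⟩ := ih l2 a hlen2 hc2 hlast2
      exact ⟨l', fun y hy => by simp [hsub hy], hch, hl', hnd⟩
    · match l with
      | [] => exact ⟨[], by simp, List.Chain.nil, hlast, by simp⟩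
      | c :: l0 =>
        obtain ⟨hac, hc0⟩ := List.chain_cons.mp hc
        have hlast0 : (c :: l0).getLast (List.cons_ne_nil c l0) = b := by
          rw [← hlast, List.getLast_cons (List.cons_ne_nil c l0)]
        have hlen0 : l0.length ≤ n := by simp at hl; omega
        obtain ⟨l', hsub, hch, hl', hnd⟩ := ih l0 c hlen0 hc0 hlast0
        have hsub' : c :: l' ⊆ c :: l0 := List.cons_subset_cons c hsub
        refine ⟨c :: l', hsub', List.chain_cons.mpr ⟨hac, hch⟩, ?_, ?_⟩
        · rw [List.getLast_cons (List.cons_ne_nil c l')]; exact hl'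
        · refine List.nodup_cons.mpr ⟨fun hmem => ha (hsub' hmem), hnd⟩

/-- From every node with positive excess under a preflow there is a directed path in
the residual network to the source `s`. -/
theorem exists_residual_path_to_source [Fintype V] (s t : V) (hst : s ≠ t)
    (u : V → V → ℝ) (hu : ∀ i j, i ≠ j → 0 ≤ u i j)
    (x : V → V → ℝ) (hx : IsPreflow u s x)
    (v : V) (hv : 0 < excess x v) :
    ∃ (L : ℕ) (p : Fin (L + 1) → V), Function.Injective p ∧ p 0 = v ∧
      p (Fin.last L) = s ∧ ∀ i : Fin L, 0 < res u x (p i.castSucc) (p i.succ) := by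
  classical
  set R : V → V → Prop := fun a b => 0 < res u x a b with hRdef
  have hreach : Relation.ReflTransGen R v s := by
    by_contra hns
    set S : Finset V := Finset.univ.filter (fun w => Relation.ReflTransGen R v w) with hS
    have hmem : ∀ w, w ∈ S ↔ Relation.ReflTransGen R v w := by simp [hS]
    have hvS : v ∈ S := (hmem v).mpr Relation.ReflTransGen.refl
    have hsS : s ∉ S := fun h => hns ((hmem s).mp h)
    have h0 : ∀ w ∈ S, 0 ≤ excess x w := fun w hw =>
      hx.2 w (fun h => hsS (h ▸ hw))
    have hpos : 0 < ∑ w ∈ S, excess x w :=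
      lt_of_lt_of_le hv (Finset.single_le_sum h0 hvS)
    have hzero : ∑ w ∈ S, ∑ j ∈ S, (x j w - x w j) = 0 := by
      simp only [Finset.sum_sub_distrib]
      rw [Finset.sum_comm]
      exact sub_self _
    have hsplit : ∑ w ∈ S, excess x w = ∑ w ∈ S, ∑ j ∈ Sᶜ, (x j w - x w j) := by
      have h1 : ∀ w, excess x w = ∑ j ∈ S, (x j w - x w j) + ∑ j ∈ Sᶜ, (x j w - x w j) := by
        intro w
        rw [Finset.sum_add_sum_compl]
        simp [excess, Finset.sum_sub_distrib]
      simp_rw [h1, Finset.sum_add_distrib, hzero, zero_add]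
    have hle : ∑ w ∈ S, ∑ j ∈ Sᶜ, (x j w - x w j) ≤ 0 := by
      refine Finset.sum_nonpos fun w hw => Finset.sum_nonpos fun j hj => ?_
      have hjS : j ∉ S := Finset.mem_compl.mp hj
      have hwj : w ≠ j := fun h => hjS (h ▸ hw)
      have hnotR : ¬ R w j := fun hr => hjS ((hmem j).mpr (((hmem w).mp hw).tail hr))
      have hres : res u x w j ≤ 0 := not_lt.mp hnotR
      have hu' := hu w j hwj
      have h1 := (hx.1 w j hwj).2
      have h2 := (hx.1 j w hwj.symm).1
      simp only [res] at hres
      linarith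
    rw [hsplit] at hpos
    linarith
  obtain ⟨l, hchain, hlast⟩ := List.exists_isChain_cons_of_relationReflTransGen hreach
  obtain ⟨l', -, hch, hl's, hnd⟩ := chain_nodup_aux R s l.length l v le_rfl hchain hlast
  refine ⟨l'.length, fun i => (v :: l').get (i.cast (by simp)), ?_, ?_, ?_, ?_⟩
  · intro i j hij
    have := List.nodup_iff_injective_get.mp hnd hij
    simpa [Fin.ext_iff] using this
  · rfl
  · rw [List.getLast_eq_getElem] at hl's
    convert hl's using 2
    simp
  · intro i
    have hch' : List.Chain' R (v :: l') := hch
    have := List.isChain_iff_getElem.mp hch' i (by simp)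
    exact this
end

section
/- (Each arc is medium in at most O(log_k n) scaling phases.) Let k ≥ 2 and n ≥ 1 be integers, and define Q = ⌈log_k(4n)⌉, ε = k^{−Q}, and M = k^{2Q}. Let Δ : ℕ → ℝ be a sequence of positive reals with Δ(i+1) ≤ Δ(i)/k for every i. Then for every real c > 0, the number of indices i with ε⁵·Δ(i) ≤ c < 2M·Δ(i) is at most 7Q + 2. -/
/-!
If phase `i` is medium then `ε⁵ Δᵢ ≤ c`, while `d` phases later `Δ` has shrunk by `kᵈ`;
once `kᵈ ≥ 2M/ε⁵ = 2k^{7Q}`, i.e. for `d ≥ 7Q + 1`, we get `2MΔ ≤ c`. So all medium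
phases lie in a window of `7Q + 1` consecutive indices starting at the first one.
-/

section Decay
variable {α : Type*} [Field α] [LinearOrder α] [IsStrictOrderedRing α]
  {Δ : ℕ → α} {r : α}

theorem le_div_pow_of_forall_succ_le_div (hr : 0 ≤ r) (hΔ : ∀ i, Δ (i + 1) ≤ Δ i / r)
    (i d : ℕ) :
    Δ (i + d) ≤ Δ i / r ^ d := by
  induction d with
  | zero => simp
  | succ d ih =>
    calc Δ (i + (d + 1)) ≤ Δ (i + d) / r := hΔ (i + d)
      _ ≤ Δ i / r ^ d / r := by gcongr
      _ = Δ i / r ^ (d + 1) := by rw [div_div, pow_succ]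

theorem pow_sub_mul_lt_of_forall_succ_le_div (hr : 0 < r) (hΔpos : ∀ i, 0 < Δ i)
    (hΔ : ∀ i, Δ (i + 1) ≤ Δ i / r) {a b c : α} (hb : 0 ≤ b) {i j : ℕ} (hij : i ≤ j)
    (hi : a * Δ i ≤ c) (hj : c < b * Δ j) :
    r ^ (j - i) * a < b := by
  have hrd : 0 < r ^ (j - i) := pow_pos hr _
  have hdecay : Δ j ≤ Δ i / r ^ (j - i) := by
    simpa [Nat.add_sub_cancel' hij] using le_div_pow_of_forall_succ_le_div hr.le hΔ i (j - i)
  have : a * Δ i < b * (Δ i / r ^ (j - i)) :=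
    hi.trans_lt (hj.trans_le (mul_le_mul_of_nonneg_left hdecay hb))
  rw [mul_div_assoc', lt_div_iff₀ hrd] at this
  exact lt_of_mul_lt_mul_right (by linarith) (hΔpos i).le

end Decay

theorem Set.finite_and_ncard_le_of_forall_le_add {S : Set ℕ} {L : ℕ}
    (h : ∀ i ∈ S, ∀ j ∈ S, i ≤ j → j ≤ i + L) : S.Finite ∧ S.ncard ≤ L + 1 := by
  rcases S.eq_empty_or_nonempty with rfl | hS
  · simp
  have hsub : S ⊆ Set.Icc (sInf S) (sInf S + L) := fun j hj =>
    ⟨Nat.sInf_le hj, h _ (Nat.sInf_mem hS) j hj (Nat.sInf_le hj)⟩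
  refine ⟨(Set.finite_Icc _ _).subset hsub, ?_⟩
  calc S.ncard ≤ (Set.Icc (sInf S) (sInf S + L)).ncard :=
        Set.ncard_le_ncard hsub (Set.finite_Icc _ _)
    _ = L + 1 := by rw [Set.ncard_eq_toFinset_card', Set.toFinset_Icc, Nat.card_Icc]; omega

theorem medium_arc_phase_count_general (k Q : ℕ) (hk : 2 ≤ k)
    (Δ : ℕ → ℝ) (hΔpos : ∀ i, 0 < Δ i) (hΔ : ∀ i, Δ (i + 1) ≤ Δ i / k)
    (c : ℝ) :
    {i : ℕ | (((k : ℝ) ^ Q)⁻¹) ^ 5 * Δ i ≤ c ∧ c < 2 * (k : ℝ) ^ (2 * Q) * Δ i}.Finite ∧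
    {i : ℕ | (((k : ℝ) ^ Q)⁻¹) ^ 5 * Δ i ≤ c ∧ c < 2 * (k : ℝ) ^ (2 * Q) * Δ i}.ncard
      ≤ 7 * Q + 2 := by
  have hk1 : (1 : ℝ) < k := by exact_mod_cast hk
  refine (Set.finite_and_ncard_le_of_forall_le_add (L := 7 * Q) ?_).imp_right
    (·.trans (by omega))
  rintro i ⟨hi, -⟩ j ⟨-, hj⟩ hij
  have hshrink :=
    pow_sub_mul_lt_of_forall_succ_le_div (by positivity) hΔpos hΔ (by positivity) hij hi hj
  have hpow : (k : ℝ) ^ (j - i) < (k : ℝ) ^ (7 * Q + 1) := by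
    have hkQ : (0 : ℝ) < (k : ℝ) ^ (5 * Q) := by positivity
    rw [inv_pow, ← pow_mul, mul_comm Q 5, ← div_eq_mul_inv, div_lt_iff₀ hkQ] at hshrink
    calc (k : ℝ) ^ (j - i) < 2 * (k : ℝ) ^ (2 * Q) * (k : ℝ) ^ (5 * Q) := hshrink
      _ = 2 * (k : ℝ) ^ (7 * Q) := by ring
      _ ≤ (k : ℝ) ^ (7 * Q + 1) := by rw [pow_succ']; gcongr; exact_mod_cast hk
  have := (pow_lt_pow_iff_right₀ hk1).1 hpow
  omega

/-- If the scaling parameter decreases by a factor of at least `k` each phase, then a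
fixed bi-capacity `c` is "medium" (`ε⁵Δ ≤ c < 2MΔ`) in at most `7Q + 2` phases. -/
theorem medium_arc_phase_count (k n Q : ℕ) (hk : 2 ≤ k) (hn : 1 ≤ n)
    (hQpos : 0 < Q) (hQ : 4 * n ≤ k ^ Q)
    (hQmin : ∀ Q' : ℕ, 0 < Q' → 4 * n ≤ k ^ Q' → Q ≤ Q')
    (Δ : ℕ → ℝ) (hΔpos : ∀ i, 0 < Δ i) (hΔ : ∀ i, Δ (i + 1) ≤ Δ i / k)
    (c : ℝ) (hc : 0 < c) :
    {i : ℕ | (((k : ℝ) ^ Q)⁻¹) ^ 5 * Δ i ≤ c ∧ c < 2 * (k : ℝ) ^ (2 * Q) * Δ i}.Finite ∧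
    {i : ℕ | (((k : ℝ) ^ Q)⁻¹) ^ 5 * Δ i ≤ c ∧ c < 2 * (k : ℝ) ^ (2 * Q) * Δ i}.ncard
      ≤ 7 * Q + 2 :=
  medium_arc_phase_count_general k Q hk Δ hΔpos hΔ c
end

section
/- (Imbalance identity.) Let v be a node of a flow network with node set N. Let Small and Large be disjoint sets of ordered pairs of distinct nodes such that every pair (v,j) and every pair (j,v) with j ≠ v lies in exactly one of Small and Large, and such that (v,j) ∈ Small if and only if (j,v) ∈ Small. Let Anti ⊆ Large be a set such that for every (v,j) ∈ Large exactly one of (v,j) and (j,v) belongs to Anti. For capacity-feasible functions x and y write D_{ij} = r_{ij}(y) − r_{ij}(x), and define IMB(v, y−x) = (e_y(v) − e_x(v)) + Σ_{(j,v)∈Anti} D_{jv} − Σ_{(v,j)∈Anti} D_{vj}. Then IMB(v, y−x) = Σ_{(v,j)∈Small} D_{vj}, and consequently |IMB(v, y−x)| ≤ Σ_{(v,j)∈Small} (u(v,j) + u(j,v)). -/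
/-!
Write `D j = r_{vj}(y) - r_{vj}(x)`. Changing the flow on the pair `{v, j}` changes both
`r_{vj}` and the excess of `v` by the same amount, and `r_{jv}` by its negative, so
`e_y(v) - e_x(v) = ∑ j, D j` and `D_{jv} = - D j`. For `j ≠ v` the pair `(v, j)` is either
small, and then neither `(v, j)` nor `(j, v)` is in `Anti`, or large, and then exactly one of
them is; so the two `Anti` sums subtract every large term once and leave the small ones.
Each `D j` is a difference of two numbers in `[0, u(v,j) + u(j,v)]`, which gives the bound.
-/

open Finset

variable {V : Type*}

lemma res_sub_res_swap (u x y : V → V → ℝ) (i j : V) :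
    res u y j i - res u x j i = -(res u y i j - res u x i j) := by
  unfold res
  ring

lemma excess_sub_excess_eq_sum_res_sub_res [Fintype V] (u x y : V → V → ℝ) (v : V) :
    excess y v - excess x v = ∑ j, (res u y v j - res u x v j) := by
  simp only [excess, res, sum_sub_distrib, sum_add_distrib]
  ring

section CapFeasible

variable {u x y : V → V → ℝ} {i j : V}

lemma IsCapFeasible.res_nonneg (hx : IsCapFeasible u x) (hij : i ≠ j) : 0 ≤ res u x i j := by
  have := hx i j hij
  have := hx j i hij.symm
  unfold res
  linarith

lemma IsCapFeasible.res_le (hx : IsCapFeasible u x) (hij : i ≠ j) :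
    res u x i j ≤ u i j + u j i := by
  have := hx i j hij
  have := hx j i hij.symm
  unfold res
  linarith

lemma IsCapFeasible.abs_res_sub_res_le (hx : IsCapFeasible u x) (hy : IsCapFeasible u y)
    (hij : i ≠ j) : |res u y i j - res u x i j| ≤ u i j + u j i :=
  abs_sub_le_of_nonneg_of_le (hy.res_nonneg hij) (hy.res_le hij)
    (hx.res_nonneg hij) (hx.res_le hij)

end CapFeasible

section AntiArcs

variable {Small Large Anti : Finset (V × V)} {v j : V}

lemma notMem_anti_of_mem_small (hdisj : Disjoint Small Large)
    (hSmallSymm : ∀ j : V, ((v, j) ∈ Small ↔ (j, v) ∈ Small)) (hAntiSub : Anti ⊆ Large)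
    (hj : (v, j) ∈ Small) : (j, v) ∉ Anti ∧ (v, j) ∉ Anti :=
  ⟨fun h => disjoint_left.mp hdisj ((hSmallSymm j).mp hj) (hAntiSub h),
    fun h => disjoint_left.mp hdisj hj (hAntiSub h)⟩

lemma mem_anti_iff_of_notMem_small
    (hcover : ∀ j, j ≠ v →
      (((v, j) ∈ Small ∨ (v, j) ∈ Large) ∧ ((j, v) ∈ Small ∨ (j, v) ∈ Large)))
    (hAntiOne : ∀ j : V, (v, j) ∈ Large → ((v, j) ∈ Anti ↔ (j, v) ∉ Anti))
    (hjv : j ≠ v) (hj : (v, j) ∉ Small) : (v, j) ∈ Anti ↔ (j, v) ∉ Anti :=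
  hAntiOne j ((hcover j hjv).1.resolve_left hj)

lemma sum_sub_sum_anti_eq_sum_small [Fintype V] [DecidableEq V] {M : Type*} [AddCommGroup M] {f : V → M}
    (hfv : f v = 0) (hdisj : Disjoint Small Large)
    (hcover : ∀ j, j ≠ v →
      (((v, j) ∈ Small ∨ (v, j) ∈ Large) ∧ ((j, v) ∈ Small ∨ (j, v) ∈ Large)))
    (hSmallSymm : ∀ j : V, ((v, j) ∈ Small ↔ (j, v) ∈ Small)) (hAntiSub : Anti ⊆ Large)
    (hAntiOne : ∀ j : V, (v, j) ∈ Large → ((v, j) ∈ Anti ↔ (j, v) ∉ Anti)) :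
    ∑ j, f j - ∑ j ∈ univ.filter (fun j => (j, v) ∈ Anti), f j
        - ∑ j ∈ univ.filter (fun j => (v, j) ∈ Anti), f j
      = ∑ j ∈ univ.filter (fun j => (v, j) ∈ Small), f j := by
  simp only [sum_filter, ← sum_sub_distrib]
  refine sum_congr rfl fun j _ => ?_
  by_cases hjv : j = v
  · simp [hjv, hfv]
  by_cases hj : (v, j) ∈ Small
  · obtain ⟨h₁, h₂⟩ := notMem_anti_of_mem_small hdisj hSmallSymm hAntiSub hj
    simp [hj, h₁, h₂]
  · have := mem_anti_iff_of_notMem_small hcover hAntiOne hjv hj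
    by_cases h : (j, v) ∈ Anti <;> simp_all

end AntiArcs

theorem imbalance_identity_general [Fintype V] [DecidableEq V]
    (u : V → V → ℝ)
    (x y : V → V → ℝ) (hx : IsCapFeasible u x) (hy : IsCapFeasible u y)
    (v : V) (Small Large Anti : Finset (V × V))
    (hSmallNe : ∀ q ∈ Small, q.1 ≠ q.2)
    (hdisj : Disjoint Small Large)
    (hcover : ∀ j, j ≠ v →
      (((v, j) ∈ Small ∨ (v, j) ∈ Large) ∧ ((j, v) ∈ Small ∨ (j, v) ∈ Large)))
    (hSmallSymm : ∀ j : V, ((v, j) ∈ Small ↔ (j, v) ∈ Small))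
    (hAntiSub : Anti ⊆ Large)
    (hAntiOne : ∀ j : V, (v, j) ∈ Large → ((v, j) ∈ Anti ↔ (j, v) ∉ Anti)) :
    ((excess y v - excess x v)
        + ∑ j ∈ univ.filter (fun j => (j, v) ∈ Anti), (res u y j v - res u x j v)
        - ∑ j ∈ univ.filter (fun j => (v, j) ∈ Anti), (res u y v j - res u x v j))
      = ∑ j ∈ univ.filter (fun j => (v, j) ∈ Small), (res u y v j - res u x v j) ∧
    |(excess y v - excess x v)
        + ∑ j ∈ univ.filter (fun j => (j, v) ∈ Anti), (res u y j v - res u x j v)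
        - ∑ j ∈ univ.filter (fun j => (v, j) ∈ Anti), (res u y v j - res u x v j)|
      ≤ ∑ j ∈ univ.filter (fun j => (v, j) ∈ Small), (u v j + u j v) := by
  set f : V → ℝ := fun j => res u y v j - res u x v j
  have hanti : ∑ j ∈ univ.filter (fun j => (j, v) ∈ Anti), (res u y j v - res u x j v)
      = -∑ j ∈ univ.filter (fun j => (j, v) ∈ Anti), f j := by
    rw [← sum_neg_distrib]
    exact sum_congr rfl fun j _ => res_sub_res_swap u x y v j
  have hidentity := sum_sub_sum_anti_eq_sum_small (f := f) (by simp [f, res]) hdisj hcover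
    hSmallSymm hAntiSub hAntiOne
  rw [excess_sub_excess_eq_sum_res_sub_res u, hanti, ← sub_eq_add_neg, hidentity]
  refine ⟨rfl, (abs_sum_le_sum_abs _ _).trans (sum_le_sum fun j hj => ?_)⟩
  exact hx.abs_res_sub_res_le hy (hSmallNe _ (mem_filter.mp hj).2)

/-- Imbalance identity: the change of the `Δ`-imbalance of `v` between two
capacity-feasible functions equals the change of residual capacities on the small
arcs leaving `v`, and is hence bounded by the total small bi-capacity at `v`. -/
theorem imbalance_identity [Fintype V] [DecidableEq V] (s t : V) (hst : s ≠ t)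
    (u : V → V → ℝ) (hu : ∀ i j, i ≠ j → 0 ≤ u i j)
    (x y : V → V → ℝ) (hx : IsCapFeasible u x) (hy : IsCapFeasible u y)
    (v : V) (Small Large Anti : Finset (V × V))
    (hSmallNe : ∀ q ∈ Small, q.1 ≠ q.2) (hLargeNe : ∀ q ∈ Large, q.1 ≠ q.2)
    (hdisj : Disjoint Small Large)
    (hcover : ∀ j, j ≠ v →
      (((v, j) ∈ Small ∨ (v, j) ∈ Large) ∧ ((j, v) ∈ Small ∨ (j, v) ∈ Large)))
    (hSmallSymm : ∀ j : V, ((v, j) ∈ Small ↔ (j, v) ∈ Small))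
    (hAntiSub : Anti ⊆ Large)
    (hAntiOne : ∀ j : V, (v, j) ∈ Large → ((v, j) ∈ Anti ↔ (j, v) ∉ Anti)) :
    ((excess y v - excess x v)
        + ∑ j ∈ univ.filter (fun j => (j, v) ∈ Anti), (res u y j v - res u x j v)
        - ∑ j ∈ univ.filter (fun j => (v, j) ∈ Anti), (res u y v j - res u x v j))
      = ∑ j ∈ univ.filter (fun j => (v, j) ∈ Small), (res u y v j - res u x v j) ∧
    |(excess y v - excess x v)
        + ∑ j ∈ univ.filter (fun j => (j, v) ∈ Anti), (res u y j v - res u x j v)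
        - ∑ j ∈ univ.filter (fun j => (v, j) ∈ Anti), (res u y v j - res u x v j)|
      ≤ ∑ j ∈ univ.filter (fun j => (v, j) ∈ Small), (u v j + u j v) :=
  imbalance_identity_general u x y hx hy v Small Large Anti hSmallNe hdisj hcover hSmallSymm
    hAntiSub hAntiOne
end

section
/- (Cycle rebalancing for expanding contracted cycles.) Let p ≥ 2 and let W be a directed cycle with nodes v_0, v_1, …, v_{p−1} and arcs (v_i, v_{i+1 mod p}) for i = 0, …, p−1. Let b : {0, …, p−1} → ℝ satisfy Σ_{i} b(i) = 0. Then there exists a nonnegative function y' on the arcs of W such that for every i, y'(v_{i−1 mod p}, v_i) − y'(v_i, v_{i+1 mod p}) = b(i), and such that y'(a) ≤ Σ_{i} |b(i)| for every arc a of W. -/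
/-!
The flow on arc `i` is a constant minus the partial sum `b 0 + ⋯ + b i`; consecutive partial
sums differ by `b i`, and `∑ b = 0` makes this hold across the wrap-around arc too. Taking the
constant to be `∑ b⁺` keeps every value between `0` and `∑ b⁺ + ∑ b⁻ = ∑ |b|`.
-/

open Finset

section PartialSums

variable {α : Type*} [AddCommGroup α] [LinearOrder α] [IsOrderedAddMonoid α]

theorem sum_range_le_sum_range_posPart (b : ℕ → α) {i n : ℕ} (h : i ≤ n) :
    ∑ j ∈ range i, b j ≤ ∑ j ∈ range n, (b j)⁺ :=
  (sum_le_sum fun j _ => le_posPart (b j)).trans <|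
    sum_le_sum_of_subset_of_nonneg (range_subset_range.mpr h) fun _ _ _ => posPart_nonneg _

theorem neg_sum_range_le_sum_range_negPart (b : ℕ → α) {i n : ℕ} (h : i ≤ n) :
    -∑ j ∈ range i, b j ≤ ∑ j ∈ range n, (b j)⁻ := by
  rw [← sum_neg_distrib]
  exact (sum_le_sum fun j _ => neg_le_negPart (b j)).trans <|
    sum_le_sum_of_subset_of_nonneg (range_subset_range.mpr h) fun _ _ _ => negPart_nonneg _

end PartialSums

theorem sum_range_add_sub_one_mod_add_one {M : Type*} [AddCommMonoid M] {b : ℕ → M}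
    {p i : ℕ} (hsum : ∑ j ∈ range p, b j = 0) (hi : i < p) :
    ∑ j ∈ range ((i + p - 1) % p + 1), b j = ∑ j ∈ range i, b j := by
  rcases i with _ | i
  · rw [zero_add, Nat.mod_eq_of_lt (by omega), Nat.sub_add_cancel (by omega), hsum,
      sum_range_zero]
  · rw [show i + 1 + p - 1 = i + p by omega, Nat.add_mod_right, Nat.mod_eq_of_lt (by omega)]

/-- Arc `i` goes from node `i` to node `(i + 1) % p`, so node `i` receives arc `(i + p - 1) % p`
and sends arc `i`. -/
theorem cycle_rebalancing_general (p : ℕ) (b : ℕ → ℝ)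
    (hsum : ∑ i ∈ Finset.range p, b i = 0) :
    ∃ y' : ℕ → ℝ,
      (∀ i ∈ Finset.range p, 0 ≤ y' i) ∧
      (∀ i ∈ Finset.range p, y' ((i + p - 1) % p) - y' i = b i) ∧
      (∀ i ∈ Finset.range p, y' i ≤ ∑ j ∈ Finset.range p, |b j|) := by
  refine ⟨fun i => ∑ j ∈ range p, (b j)⁺ - ∑ j ∈ range (i + 1), b j,
    fun i hi => ?_, fun i hi => ?_, fun i hi => ?_⟩
  · exact sub_nonneg.mpr (sum_range_le_sum_range_posPart b (mem_range.mp hi))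
  · dsimp only
    rw [sum_range_add_sub_one_mod_add_one hsum (mem_range.mp hi), sum_range_succ]
    abel
  · have hneg := neg_sum_range_le_sum_range_negPart b (mem_range.mp hi)
    calc ∑ j ∈ range p, (b j)⁺ - ∑ j ∈ range (i + 1), b j
        ≤ ∑ j ∈ range p, (b j)⁺ + ∑ j ∈ range p, (b j)⁻ := by linarith
      _ = ∑ j ∈ range p, |b j| := by simp only [← sum_add_distrib, posPart_add_negPart]

/-- Cycle rebalancing: on a directed cycle with `p` nodes (node `i` receives the arc
indexed `(i+p-1) % p` and sends the arc indexed `i`), any balance vector `b` summing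
to zero can be realized by a nonnegative circulation `y'` whose value on every arc is
at most `∑ |b j|`. -/
theorem cycle_rebalancing (p : ℕ) (hp : 2 ≤ p) (b : ℕ → ℝ)
    (hsum : ∑ i ∈ Finset.range p, b i = 0) :
    ∃ y' : ℕ → ℝ,
      (∀ i ∈ Finset.range p, 0 ≤ y' i) ∧
      (∀ i ∈ Finset.range p, y' ((i + p - 1) % p) - y' i = b i) ∧
      (∀ i ∈ Finset.range p, y' i ≤ ∑ j ∈ Finset.range p, |b j|) :=
  cycle_rebalancing_general p b hsum
end
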